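/- Let X be the set of all ultrametric norms on a finite-dimensional vector space V over a spherically complete non-Archimedean valued field 𝕂. Then closed balls in (X, d), where d is the Goldman–Iwahori metric, satisfy the Helly property: any family of pairwise intersecting closed balls has nonempty global intersection. -/

import Mathlib

def IsUltraNorm (𝕂 : Type*) [NormedField 𝕂] {V : Type*} [AddCommGroup V] [Module 𝕂 V]
    (η : V → ℝ) : Prop :=
  (∀ v, 0 ≤ η v) ∧ (∀ v, η v = 0 ↔ v = 0) ∧
    (∀ (α : 𝕂) (v : V), η (α • v) = ‖α‖ * η v) ∧ ∀ u v, η (u + v) ≤ max (η u) (η v)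

noncomputable def GIdist {V : Type*} [Zero V] (η η' : V → ℝ) : ℝ :=
  ⨆ v : {v : V // v ≠ 0}, |Real.log (η v.1 / η' v.1)|

/-- `𝕂` is spherically complete: every decreasing sequence of closed balls has
nonempty intersection. -/
def SphericallyComplete (𝕂 : Type*) [PseudoMetricSpace 𝕂] : Prop :=
  ∀ (c : ℕ → 𝕂) (r : ℕ → ℝ),
    (∀ k, Metric.closedBall (c (k + 1)) (r (k + 1)) ⊆ Metric.closedBall (c k) (r k)) →
    (⋂ k, Metric.closedBall (c k) (r k)).Nonempty

/-!
Over a complete field every ultrametric norm on `𝕂ⁿ` is equivalent to the sup norm, by induction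
on `n` through `𝕂 × 𝕂ⁿ`: if `η (1, wₖ) → 0`, then `(wₖ)` is Cauchy for the sup norm and its limit
`u` would satisfy `η (1, u) = 0`. Hence `log (η / θ)` is bounded for any two ultrametric norms, so
`GIdist η θ ≤ r` (a real `⨆`, which is `0` for an unbounded family) means exactly
`e⁻ʳ θ ≤ η ≤ eʳ θ` pointwise. For pairwise intersecting balls `B(cᵢ, rᵢ)` this gives
`e^(-rᵢ) cᵢ ≤ e^(rⱼ) cⱼ` for all `i, j`, and then `θ = ⨆ᵢ e^(-rᵢ) cᵢ` is an ultrametric norm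
lying in every ball.
-/

open Filter Metric Set Topology Real

theorem SphericallyComplete.completeSpace {X : Type*} [PseudoMetricSpace X]
    (h : SphericallyComplete X) : CompleteSpace X := by
  refine Metric.complete_of_convergent_controlled_sequences (fun N => (1 / 2) ^ (N + 1))
    (fun N => by positivity) fun u hu => ?_
  have hnested : ∀ N, closedBall (u (N + 1)) ((1 / 2) ^ (N + 1)) ⊆
      closedBall (u N) ((1 / 2) ^ N) := by
    intro N x hx
    rw [mem_closedBall] at hx ⊢
    calc dist x (u N) ≤ dist x (u (N + 1)) + dist (u (N + 1)) (u N) := dist_triangle _ _ _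
      _ ≤ (1 / 2) ^ (N + 1) + (1 / 2) ^ (N + 1) :=
        add_le_add hx (hu N (N + 1) N N.le_succ le_rfl).le
      _ = (1 / 2) ^ N := by ring
  obtain ⟨x, hx⟩ := h u (fun N => (1 / 2) ^ N) hnested
  rw [mem_iInter] at hx
  exact ⟨x, tendsto_iff_dist_tendsto_zero.2 <| squeeze_zero (fun _ => dist_nonneg)
    (fun N => mem_closedBall'.1 (hx N))
    (tendsto_pow_atTop_nhds_zero_of_lt_one (by norm_num) (by norm_num))⟩

theorem abs_log_div_le_iff {x y r : ℝ} (hx : 0 < x) (hy : 0 < y) :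
    |log (x / y)| ≤ r ↔ x ≤ exp r * y ∧ y ≤ exp r * x := by
  rw [abs_le, neg_le, ← Real.log_inv, inv_div, Real.log_le_iff_le_exp (div_pos hy hx),
    Real.log_le_iff_le_exp (div_pos hx hy), div_le_iff₀ hx, div_le_iff₀ hy, and_comm]

namespace IsUltraNorm

section Module

variable {𝕂 V : Type*} [NormedField 𝕂] [AddCommGroup V] [Module 𝕂 V] {η : V → ℝ}

theorem nonneg (h : IsUltraNorm 𝕂 η) (v : V) : 0 ≤ η v := h.1 v

theorem eq_zero_iff (h : IsUltraNorm 𝕂 η) {v : V} : η v = 0 ↔ v = 0 := h.2.1 v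

theorem map_smul (h : IsUltraNorm 𝕂 η) (α : 𝕂) (v : V) : η (α • v) = ‖α‖ * η v := h.2.2.1 α v

theorem add_le (h : IsUltraNorm 𝕂 η) (u v : V) : η (u + v) ≤ max (η u) (η v) := h.2.2.2 u v

theorem map_zero (h : IsUltraNorm 𝕂 η) : η 0 = 0 := h.eq_zero_iff.2 rfl

theorem pos (h : IsUltraNorm 𝕂 η) {v : V} (hv : v ≠ 0) : 0 < η v :=
  (h.nonneg v).lt_of_ne fun h0 => hv (h.eq_zero_iff.1 h0.symm)

theorem map_neg (h : IsUltraNorm 𝕂 η) (v : V) : η (-v) = η v := by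
  simpa using h.map_smul (-1) v

theorem sub_le (h : IsUltraNorm 𝕂 η) (u v : V) : η (u - v) ≤ max (η u) (η v) := by
  simpa only [sub_eq_add_neg, h.map_neg] using h.add_le u (-v)

theorem abs_sub_le (h : IsUltraNorm 𝕂 η) (u v : V) : |η u - η v| ≤ η (u - v) := by
  have key : ∀ u v : V, η u ≤ η (u - v) + η v := fun u v => by
    simpa using (h.add_le (u - v) v).trans (max_le_add_of_nonneg (h.nonneg _) (h.nonneg _))
  rw [abs_sub_le_iff]
  constructor
  · linarith [key u v]
  · have hneg := h.map_neg (u - v)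
    rw [neg_sub] at hneg
    linarith [key v u]

theorem comp {W : Type*} [AddCommGroup W] [Module 𝕂 W] (h : IsUltraNorm 𝕂 η) (f : W →ₗ[𝕂] V)
    (hf : Function.Injective f) : IsUltraNorm 𝕂 (fun w => η (f w)) :=
  ⟨fun w => h.nonneg _, fun w => h.eq_zero_iff.trans (map_eq_zero_iff f hf),
    fun α w => by simp only [f.map_smul, h.map_smul],
    fun u w => by simpa only [f.map_add] using h.add_le (f u) (f w)⟩

theorem const_mul (h : IsUltraNorm 𝕂 η) {s : ℝ} (hs : 0 < s) :
    IsUltraNorm 𝕂 (fun v => s * η v) :=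
  ⟨fun v => mul_nonneg hs.le (h.nonneg v), fun v => by simp [hs.ne', h.eq_zero_iff],
    fun α v => by simp only [h.map_smul]; ring,
    fun u v => (mul_le_mul_of_nonneg_left (h.add_le u v) hs.le).trans_eq
      (mul_max_of_nonneg _ _ hs.le)⟩

theorem iSup {ι : Type*} [Nonempty ι] {η : ι → V → ℝ} (h : ∀ i, IsUltraNorm 𝕂 (η i))
    (hbdd : ∀ v, BddAbove (range fun i => η i v)) : IsUltraNorm 𝕂 (fun v => ⨆ i, η i v) := by
  have hle : ∀ i v, η i v ≤ ⨆ i, η i v := fun i v => le_ciSup (hbdd v) i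
  obtain ⟨i₀⟩ := ‹Nonempty ι›
  refine ⟨fun v => (h i₀).nonneg v |>.trans (hle i₀ v), fun v => ⟨fun h0 => ?_, ?_⟩,
    fun α v => ?_, fun u v => ciSup_le fun i => ?_⟩
  · by_contra hv
    exact ((h i₀).pos hv).not_ge (h0 ▸ hle i₀ v)
  · rintro rfl
    simp only [(h _).map_zero, ciSup_const]
  · simp only [(h _).map_smul, Real.mul_iSup_of_nonneg (norm_nonneg α)]
  · exact (h i).add_le u v |>.trans (max_le_max (hle i u) (hle i v))

end Module

variable {𝕂 E : Type*} [NormedField 𝕂] [SeminormedAddCommGroup E] [NormedSpace 𝕂 E]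

theorem continuous_of_le_mul_norm {η : E → ℝ} (h : IsUltraNorm 𝕂 η) {C : ℝ}
    (hC : ∀ v, η v ≤ C * ‖v‖) : Continuous η :=
  (LipschitzWith.of_dist_le' fun u v => by
    rw [Real.dist_eq, dist_eq_norm]
    exact (h.abs_sub_le u v).trans (hC _)).continuous

end IsUltraNorm

theorem isUltraNorm_norm {𝕂 E : Type*} [NormedField 𝕂] [NormedAddCommGroup E]
    [NormedSpace 𝕂 E] [IsUltrametricDist E] : IsUltraNorm 𝕂 (fun v : E => ‖v‖) :=
  ⟨norm_nonneg, fun _ => norm_eq_zero, norm_smul, IsUltrametricDist.norm_add_le_max⟩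

theorem exists_isUltraNorm (𝕂 V : Type*) [NormedField 𝕂] [IsUltrametricDist 𝕂]
    [AddCommGroup V] [Module 𝕂 V] [FiniteDimensional 𝕂 V] : ∃ η : V → ℝ, IsUltraNorm 𝕂 η :=
  let e := (Module.finBasis 𝕂 V).equivFun
  ⟨_, isUltraNorm_norm.comp e.toLinearMap e.injective⟩

section NormEquivalence

variable {𝕂 E F : Type*} [NormedField 𝕂] [SeminormedAddCommGroup E] [NormedSpace 𝕂 E]
  [SeminormedAddCommGroup F] [NormedSpace 𝕂 F]

variable (𝕂 E) in
def UltraNormsEquivNorm : Prop :=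
  ∀ η : E → ℝ, IsUltraNorm 𝕂 η →
    (∃ C > 0, ∀ v, η v ≤ C * ‖v‖) ∧ ∃ C > 0, ∀ v, ‖v‖ ≤ C * η v

theorem UltraNormsEquivNorm.of_subsingleton [Subsingleton E] : UltraNormsEquivNorm 𝕂 E :=
  fun η h => ⟨⟨1, one_pos, fun v => by simp [Subsingleton.elim v 0, h.map_zero]⟩,
    ⟨1, one_pos, fun v => by simp [Subsingleton.elim v 0, h.map_zero]⟩⟩

theorem UltraNormsEquivNorm.of_linearIsometryEquiv (hE : UltraNormsEquivNorm 𝕂 E)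
    (e : E ≃ₗᵢ[𝕂] F) : UltraNormsEquivNorm 𝕂 F := by
  intro η h
  obtain ⟨⟨C, hC, hupper⟩, ⟨c, hc, hlower⟩⟩ :=
    hE _ (h.comp e.toLinearEquiv.toLinearMap e.injective)
  refine ⟨⟨C, hC, fun v => ?_⟩, ⟨c, hc, fun v => ?_⟩⟩
  · simpa using hupper (e.symm v)
  · simpa using hlower (e.symm v)

namespace IsUltraNorm

variable {η : 𝕂 × E → ℝ}

theorem exists_le_mul_norm_prod (h : IsUltraNorm 𝕂 η) {C : ℝ} (hC : 0 < C)
    (hE : ∀ w, η (0, w) ≤ C * ‖w‖) : ∃ C' > 0, ∀ v, η v ≤ C' * ‖v‖ := by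
  refine ⟨max (η (1, 0)) C, lt_max_of_lt_right hC, fun ⟨a, w⟩ => ?_⟩
  have hK : 0 ≤ max (η (1, 0)) C := hC.le.trans (le_max_right _ _)
  calc η (a, w) = η (a • (1, 0) + (0, w)) := by simp
    _ ≤ max (‖a‖ * η (1, 0)) (C * ‖w‖) := by
      rw [← h.map_smul]
      exact (h.add_le _ _).trans (max_le_max le_rfl (hE w))
    _ ≤ max (η (1, 0)) C * ‖(a, w)‖ := by
      rw [Prod.norm_mk, mul_comm ‖a‖]
      exact max_le (mul_le_mul (le_max_left _ _) (le_max_left _ _) (norm_nonneg _) hK)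
        (mul_le_mul (le_max_right _ _) (le_max_right _ _) (norm_nonneg _) hK)

theorem exists_pos_le_apply_one [CompleteSpace E] (h : IsUltraNorm 𝕂 η)
    (hcont : Continuous η) {c : ℝ} (hc : 0 < c) (hE : ∀ w, ‖w‖ ≤ c * η (0, w)) :
    ∃ δ > 0, ∀ w, δ ≤ η (1, w) := by
  by_contra! hsmall
  choose w hw using fun k : ℕ => hsmall (1 / (k + 1)) Nat.one_div_pos_of_nat
  have hdist : ∀ N k, N ≤ k → η (1, w k) ≤ 1 / (N + 1) := fun N k hk =>
    (hw k).le.trans (Nat.one_div_le_one_div hk)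
  have hcauchy : CauchySeq w := by
    refine cauchySeq_of_le_tendsto_0 (fun N : ℕ => c * (1 / (N + 1))) (fun k l N hk hl => ?_)
      (by simpa using tendsto_one_div_add_atTop_nhds_zero_nat.const_mul c)
    rw [dist_eq_norm]
    refine (hE _).trans (mul_le_mul_of_nonneg_left ?_ hc.le)
    simpa using (h.sub_le (1, w k) (1, w l)).trans (max_le (hdist N k hk) (hdist N l hl))
  obtain ⟨u, hu⟩ := cauchySeq_tendsto_of_complete hcauchy
  have hlim : Tendsto (fun k => η (1, w k)) atTop (𝓝 (η (1, u))) :=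
    (hcont.tendsto _).comp (tendsto_const_nhds.prodMk_nhds hu)
  have hlim₀ : Tendsto (fun k => η (1, w k)) atTop (𝓝 0) :=
    squeeze_zero (fun k => h.nonneg _) (fun k => (hw k).le)
      tendsto_one_div_add_atTop_nhds_zero_nat
  have hzero : η (1, u) = 0 := tendsto_nhds_unique hlim hlim₀
  exact one_ne_zero (congrArg Prod.fst (h.eq_zero_iff.1 hzero))

theorem exists_norm_le_mul_prod (h : IsUltraNorm 𝕂 η) {δ : ℝ} (hδ : 0 < δ)
    (hδle : ∀ w, δ ≤ η (1, w)) {c : ℝ} (hc : 0 < c) (hE : ∀ w, ‖w‖ ≤ c * η (0, w)) :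
    ∃ C > 0, ∀ v, ‖v‖ ≤ C * η v := by
  refine ⟨max δ⁻¹ (c * max 1 (η (1, 0) / δ)), lt_max_of_lt_left (inv_pos.2 hδ),
    fun ⟨a, w⟩ => ?_⟩
  have hfirst : ‖a‖ ≤ δ⁻¹ * η (a, w) := by
    rw [inv_mul_eq_div, le_div_iff₀ hδ]
    rcases eq_or_ne a 0 with rfl | ha
    · simpa using h.nonneg _
    · have hscale : ((a, w) : 𝕂 × E) = a • (1, a⁻¹ • w) := by simp [smul_smul, ha]
      rw [hscale, h.map_smul]
      exact mul_le_mul_of_nonneg_left (hδle _) (norm_nonneg a)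
  have hsecond : η (0, w) ≤ max 1 (η (1, 0) / δ) * η (a, w) := by
    have hsplit : ((0, w) : 𝕂 × E) = (a, w) - a • (1, 0) := by simp
    rw [hsplit]
    refine (h.sub_le _ _).trans (max_le ?_ ?_)
    · exact le_mul_of_one_le_left (h.nonneg _) (le_max_left _ _)
    · rw [h.map_smul]
      calc ‖a‖ * η (1, 0) ≤ δ⁻¹ * η (a, w) * η (1, 0) :=
            mul_le_mul_of_nonneg_right hfirst (h.nonneg _)
        _ = η (1, 0) / δ * η (a, w) := by ring
        _ ≤ max 1 (η (1, 0) / δ) * η (a, w) :=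
            mul_le_mul_of_nonneg_right (le_max_right _ _) (h.nonneg _)
  rw [Prod.norm_mk]
  refine max_le (hfirst.trans ?_) ((hE w).trans ?_)
  · exact mul_le_mul_of_nonneg_right (le_max_left _ _) (h.nonneg _)
  · calc c * η (0, w) ≤ c * (max 1 (η (1, 0) / δ) * η (a, w)) :=
          mul_le_mul_of_nonneg_left hsecond hc.le
      _ ≤ max δ⁻¹ (c * max 1 (η (1, 0) / δ)) * η (a, w) := by
          rw [← mul_assoc]
          exact mul_le_mul_of_nonneg_right (le_max_right _ _) (h.nonneg _)

end IsUltraNorm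

theorem UltraNormsEquivNorm.prod [CompleteSpace E] (hE : UltraNormsEquivNorm 𝕂 E) :
    UltraNormsEquivNorm 𝕂 (𝕂 × E) := by
  intro η h
  obtain ⟨⟨C, hC, hupper⟩, ⟨c, hc, hlower⟩⟩ :=
    hE _ (h.comp (LinearMap.inr 𝕂 𝕂 E) LinearMap.inr_injective)
  obtain ⟨C', hC', hupper'⟩ := h.exists_le_mul_norm_prod hC hupper
  obtain ⟨δ, hδ, hδle⟩ :=
    h.exists_pos_le_apply_one (h.continuous_of_le_mul_norm hupper') hc hlower
  exact ⟨⟨C', hC', hupper'⟩, h.exists_norm_le_mul_prod hδ hδle hc hlower⟩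

end NormEquivalence

section FiniteDimensional

variable {𝕂 : Type*} [NormedField 𝕂]

variable (𝕂) in
def Fin.consLinearIsometryEquiv (n : ℕ) : (𝕂 × (Fin n → 𝕂)) ≃ₗᵢ[𝕂] (Fin (n + 1) → 𝕂) :=
  { Fin.consLinearEquiv 𝕂 (fun _ => 𝕂) with
    norm_map' := by
      rintro ⟨a, w⟩
      change ‖(Fin.cons a w : Fin (n + 1) → 𝕂)‖ = max ‖a‖ ‖w‖
      refine le_antisymm ((pi_norm_le_iff_of_nonneg (by positivity)).2 fun i => ?_)
        (max_le ?_ ?_)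
      · cases i using Fin.cases with
        | zero => simp
        | succ i => simpa using (norm_le_pi_norm w i).trans (le_max_right _ _)
      · simpa using norm_le_pi_norm (Fin.cons a w : Fin (n + 1) → 𝕂) 0
      · refine (pi_norm_le_iff_of_nonneg (norm_nonneg _)).2 fun i => ?_
        simpa using norm_le_pi_norm (Fin.cons a w : Fin (n + 1) → 𝕂) i.succ }

theorem ultraNormsEquivNorm_fin [CompleteSpace 𝕂] : ∀ n, UltraNormsEquivNorm 𝕂 (Fin n → 𝕂)
  | 0 => .of_subsingleton
  | n + 1 => (ultraNormsEquivNorm_fin n).prod.of_linearIsometryEquiv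
      (Fin.consLinearIsometryEquiv 𝕂 n)

variable [CompleteSpace 𝕂] {V : Type*} [AddCommGroup V] [Module 𝕂 V] [FiniteDimensional 𝕂 V]
  {η θ : V → ℝ}

theorem IsUltraNorm.exists_le_mul (hη : IsUltraNorm 𝕂 η) (hθ : IsUltraNorm 𝕂 θ) :
    ∃ C > 0, ∀ v, η v ≤ C * θ v := by
  let e := (Module.finBasis 𝕂 V).equivFun
  obtain ⟨⟨C, hC, hupper⟩, -⟩ :=
    ultraNormsEquivNorm_fin _ _ (hη.comp e.symm.toLinearMap e.symm.injective)
  obtain ⟨-, ⟨c, hc, hlower⟩⟩ :=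
    ultraNormsEquivNorm_fin _ _ (hθ.comp e.symm.toLinearMap e.symm.injective)
  refine ⟨C * c, mul_pos hC hc, fun v => ?_⟩
  calc η v ≤ C * ‖e v‖ := by simpa using hupper (e v)
    _ ≤ C * c * θ v := by
      rw [mul_assoc]
      exact mul_le_mul_of_nonneg_left (by simpa using hlower (e v)) hC.le

theorem GIdist_le_iff (hη : IsUltraNorm 𝕂 η) (hθ : IsUltraNorm 𝕂 θ) {r : ℝ} (hr : 0 ≤ r) :
    GIdist η θ ≤ r ↔ ∀ v, η v ≤ exp r * θ v ∧ θ v ≤ exp r * η v := by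
  constructor
  · intro h v
    rcases eq_or_ne v 0 with rfl | hv
    · simp [hη.map_zero, hθ.map_zero]
    obtain ⟨C, hC, hηθ⟩ := hη.exists_le_mul hθ
    obtain ⟨C', hC', hθη⟩ := hθ.exists_le_mul hη
    have hbdd : BddAbove (range fun v : {v : V // v ≠ 0} => |log (η v / θ v)|) := by
      refine ⟨log (max C C'), forall_mem_range.2 fun v => ?_⟩
      rw [abs_log_div_le_iff (hη.pos v.2) (hθ.pos v.2), exp_log (lt_max_of_lt_left hC)]
      exact ⟨(hηθ v).trans (mul_le_mul_of_nonneg_right (le_max_left _ _) (hθ.nonneg _)),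
        (hθη v).trans (mul_le_mul_of_nonneg_right (le_max_right _ _) (hη.nonneg _))⟩
    exact (abs_log_div_le_iff (hη.pos hv) (hθ.pos hv)).1
      ((le_ciSup hbdd ⟨v, hv⟩).trans h)
  · intro h
    exact Real.iSup_le (fun v => (abs_log_div_le_iff (hη.pos v.2) (hθ.pos v.2)).2 (h v)) hr

end FiniteDimensional

/-- Theorem 3.2 (Helly part): for the set of all ultrametric norms on a
finite-dimensional vector space over a spherically complete non-Archimedean
valued field, closed balls of the Goldman–Iwahori metric satisfy the Helly
property. -/
theorem ultranorms_helly
    {𝕂 : Type*} [NormedField 𝕂] [IsUltrametricDist 𝕂] (hsc : SphericallyComplete 𝕂)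
    {V : Type*} [AddCommGroup V] [Module 𝕂 V] [FiniteDimensional 𝕂 V]
    {ι : Type*} (c : ι → V → ℝ) (hc : ∀ i, IsUltraNorm 𝕂 (c i))
    (r : ι → ℝ) (hr : ∀ i, 0 ≤ r i)
    (hpair : ∀ i j, ∃ θ, IsUltraNorm 𝕂 θ ∧ GIdist (c i) θ ≤ r i ∧ GIdist (c j) θ ≤ r j) :
    ∃ θ, IsUltraNorm 𝕂 θ ∧ ∀ i, GIdist (c i) θ ≤ r i := by
  have := hsc.completeSpace
  rcases isEmpty_or_nonempty ι with _ | _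
  · obtain ⟨θ, hθ⟩ := exists_isUltraNorm 𝕂 V
    exact ⟨θ, hθ, isEmptyElim⟩
  have hscaled : ∀ i j v, exp (-r i) * c i v ≤ exp (r j) * c j v := by
    intro i j v
    obtain ⟨θ, hθ, hi, hj⟩ := hpair i j
    rw [GIdist_le_iff (hc i) hθ (hr i)] at hi
    rw [GIdist_le_iff (hc j) hθ (hr j)] at hj
    calc exp (-r i) * c i v ≤ θ v := by
          rw [exp_neg, inv_mul_le_iff₀ (exp_pos _)]
          exact (hi v).1
      _ ≤ exp (r j) * c j v := (hj v).2
  have hbdd : ∀ v, BddAbove (range fun i => exp (-r i) * c i v) := fun v =>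
    ⟨_, forall_mem_range.2 fun i => hscaled i (Classical.arbitrary ι) v⟩
  have hθ := IsUltraNorm.iSup (fun i => (hc i).const_mul (exp_pos (-r i))) hbdd
  refine ⟨_, hθ, fun i => (GIdist_le_iff (hc i) hθ (hr i)).2 fun v =>
    ⟨?_, ciSup_le fun j => hscaled j i v⟩⟩
  rw [← inv_mul_le_iff₀ (exp_pos _), ← exp_neg]
  exact le_ciSup (hbdd v) i
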